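/- The 2-strand configuration graph of the tripod Y (the star with one center and three leaves) is isomorphic to the cycle graph on 6 vertices. -/

import Mathlib

/-!
A configuration either occupies the center, `{c, i}`, or two leaves, `{i, j}`. From `{c, i}` the
only moves send the center strand to one of the two other leaves, and from `{i, j}` the only moves
send one of the two strands to the center. So the graph is 2-regular and its six vertices form the
single cycle `{c,0} – {0,1} – {c,1} – {1,2} – {c,2} – {2,0}`.
-/

/-- The tripod `Y`: the star with center `none` and three leaves `some i`. -/
def tripod : SimpleGraph (Option (Fin 3)) where
  Adj x y := x.isNone ≠ y.isNone
  symm := ⟨fun _ _ h => h.symm⟩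
  loopless := ⟨fun _ h => h rfl⟩

/-- The 2-strand configuration graph of a graph `G`: vertices are the 2-element
subsets of the vertex set, and `S` is adjacent to `T` iff `|S ∩ T| = 1` and the
unique vertex of `S \ T` is adjacent in `G` to the unique vertex of `T \ S`. -/
def conf2 {V : Type*} [DecidableEq V] (G : SimpleGraph V) :
    SimpleGraph {S : Finset V // S.card = 2} where
  Adj S T := (S.1 ∩ T.1).card = 1 ∧
    ∃ u v, u ∈ S.1 \ T.1 ∧ v ∈ T.1 \ S.1 ∧ G.Adj u v
  symm := by
    constructor
    rintro S T ⟨hc, u, v, hu, hv, ha⟩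
    exact ⟨by rwa [Finset.inter_comm], v, u, hv, hu, ha.symm⟩
  loopless := by
    constructor
    rintro S ⟨hc, u, v, hu, _⟩
    simp at hu

open SimpleGraph

instance : DecidableRel tripod.Adj := fun x y =>
  inferInstanceAs (Decidable (x.isNone ≠ y.isNone))

instance {V : Type*} [Fintype V] [DecidableEq V] (G : SimpleGraph V) [DecidableRel G.Adj] :
    DecidableRel (conf2 G).Adj := fun S T =>
  inferInstanceAs (Decidable ((S.1 ∩ T.1).card = 1 ∧
    ∃ u v, u ∈ S.1 \ T.1 ∧ v ∈ T.1 \ S.1 ∧ G.Adj u v))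

def tripodHexagon : Fin 6 → {S : Finset (Option (Fin 3)) // S.card = 2}
  | 0 => ⟨{none, some 0}, rfl⟩
  | 1 => ⟨{some 0, some 1}, rfl⟩
  | 2 => ⟨{none, some 1}, rfl⟩
  | 3 => ⟨{some 1, some 2}, rfl⟩
  | 4 => ⟨{none, some 2}, rfl⟩
  | 5 => ⟨{some 2, some 0}, rfl⟩

theorem tripodHexagon_injective : Function.Injective tripodHexagon := by
  decide

theorem tripodHexagon_bijective : Function.Bijective tripodHexagon :=
  (Fintype.bijective_iff_injective_and_card _).2
    ⟨tripodHexagon_injective, by rw [Fintype.card_finset_len]; rfl⟩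

theorem conf2_tripod_adj_tripodHexagon (i j : Fin 6) :
    (conf2 tripod).Adj (tripodHexagon i) (tripodHexagon j) ↔ (cycleGraph 6).Adj i j := by
  revert i j
  decide

/-- The 2-strand configuration graph of the tripod is a hexagon. -/
theorem conf2_tripod_iso_cycle6 : Nonempty (conf2 tripod ≃g SimpleGraph.cycleGraph 6) :=
  ⟨(⟨Equiv.ofBijective _ tripodHexagon_bijective,
    conf2_tripod_adj_tripodHexagon _ _⟩ : cycleGraph 6 ≃g conf2 tripod).symm⟩
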